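/- Let N ≥ 2, 0 < k < N, and 1 ≤ j. The number of paths w : Fin N → Bool with w(0) = false, w(N−1) = false, exactly k visits to S1, and exactly j ascents equals C(k−1, j−1)·C(N−k−1, j). (Such a path consists of j maximal blocks of trues and j+1 maximal blocks of falses; distributing k trues over j nonempty blocks and N−k falses over j+1 nonempty blocks gives the two weak-composition counts.) -/

import Mathlib

/-!
Appending a state `b` to a path adds `b` to its visits to S1, and adds one ascent exactly when
the path ended in S0 and `b` is S1. Sorting the paths that start in S0 by length, visits, ascents
and final state therefore gives Pascal-type recurrences, and these are satisfied by
`C(k-1, j-1) * C(n-k, j)` for paths of length `n+1` ending in S0 and by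
`C(k-1, j-1) * C(n-k, j-1)` for those ending in S1.
-/

open Finset

/-- Transition probability of the two-state chain: `false` is S0, `true` is S1. -/
def mcStep (p00 p01 p10 p11 : ℝ) : Bool → Bool → ℝ
  | false, false => p00
  | false, true  => p01
  | true,  false => p10
  | true,  true  => p11

/-- Weight of a path `w : Fin N → Bool`: product over `i = 0, …, N-2` of the
transition probability from `w i` to `w (i+1)`; equals `1` when `N = 1`. -/
def pathWeight (p00 p01 p10 p11 : ℝ) {N : ℕ} (w : Fin N → Bool) : ℝ :=
  ∏ i : Fin (N - 1),
    mcStep p00 p01 p10 p11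
      (w ⟨i.val, by have := i.isLt; omega⟩)
      (w ⟨i.val + 1, by have := i.isLt; omega⟩)

/-- Number of visits to S1 (i.e. `true`) of a path. -/
def visitsS1 {N : ℕ} (w : Fin N → Bool) : ℕ :=
  (Finset.univ.filter fun i : Fin N => w i = true).card

/-- Number of descents (indices `i ≤ N-2` with `w i = true` and `w (i+1) = false`). -/
def descents {N : ℕ} (w : Fin N → Bool) : ℕ :=
  (Finset.univ.filter fun i : Fin (N - 1) =>
    w ⟨i.val, by have := i.isLt; omega⟩ = true ∧
    w ⟨i.val + 1, by have := i.isLt; omega⟩ = false).card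

/-- Number of ascents (indices `i ≤ N-2` with `w i = false` and `w (i+1) = true`). -/
def ascents {N : ℕ} (w : Fin N → Bool) : ℕ :=
  (Finset.univ.filter fun i : Fin (N - 1) =>
    w ⟨i.val, by have := i.isLt; omega⟩ = false ∧
    w ⟨i.val + 1, by have := i.isLt; omega⟩ = true).card

lemma ascents_eq_card {n : ℕ} (w : Fin (n + 1) → Bool) :
    ascents w = #{i : Fin n | w i.castSucc = false ∧ w i.succ = true} := rfl

lemma visitsS1_snoc {n : ℕ} (v : Fin (n + 1) → Bool) (b : Bool) :
    visitsS1 (Fin.snoc v b : Fin (n + 2) → Bool) = visitsS1 v + b.toNat := by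
  simp only [visitsS1, card_filter, Fin.sum_univ_castSucc, Fin.snoc_castSucc, Fin.snoc_last]
  cases b <;> rfl

lemma ascents_snoc {n : ℕ} (v : Fin (n + 1) → Bool) (b : Bool) :
    ascents (Fin.snoc v b : Fin (n + 2) → Bool) = ascents v + (!v (Fin.last n) && b).toNat := by
  rw [ascents_eq_card, ascents_eq_card, card_filter, card_filter, Fin.sum_univ_castSucc]
  simp only [Fin.succ_castSucc, Fin.snoc_castSucc, Fin.succ_last, Fin.snoc_last]
  cases v (Fin.last n) <;> cases b <;> rfl

lemma eq_false_of_ascents_eq_zero {n : ℕ} {w : Fin (n + 1) → Bool} (h0 : w 0 = false)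
    (hw : ascents w = 0) : w = fun _ => false := by
  rw [ascents_eq_card, card_eq_zero, filter_eq_empty_iff] at hw
  funext i
  induction i using Fin.induction with
  | zero => exact h0
  | succ i ih => simpa [ih] using hw (mem_univ i)

lemma visitsS1_eq_zero_iff {n : ℕ} {w : Fin n → Bool} :
    visitsS1 w = 0 ↔ w = fun _ => false := by
  simp [visitsS1, funext_iff]

lemma visitsS1_le {n : ℕ} {w : Fin (n + 1) → Bool} (h0 : w 0 = false) : visitsS1 w ≤ n := by
  calc visitsS1 w ≤ #(univ.erase (0 : Fin (n + 1))) :=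
        card_le_card fun i hi => mem_erase.2 ⟨by rintro rfl; simp [h0] at hi, mem_univ i⟩
    _ = n := by simp

lemma card_filter_snoc {α : Type*} [Fintype α] [DecidableEq α] {n : ℕ}
    (p : (Fin (n + 2) → α) → Prop) [DecidablePred p] (a : α) :
    #{w | p w ∧ w (Fin.last _) = a} =
      #{v : Fin (n + 1) → α | p (Fin.snoc (α := fun _ => α) v a)} := by
  refine (card_nbij' (Fin.snoc · a) Fin.init ?_ ?_ ?_ ?_).symm
  · intro v hv; simp_all
  · intro w hw
    obtain ⟨hp, rfl⟩ := (mem_filter.1 hw).2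
    simpa [Fin.snoc_init_self] using hp
  · intro v _; simp
  · intro w hw
    obtain ⟨-, rfl⟩ := (mem_filter.1 hw).2
    exact Fin.snoc_init_self w

def pathsTo (n k j : ℕ) (b : Bool) : Finset (Fin (n + 1) → Bool) :=
  {w | (w 0 = false ∧ visitsS1 w = k ∧ ascents w = j) ∧ w (Fin.last n) = b}

lemma card_pathsTo_succ (n k j : ℕ) (b : Bool) :
    #(pathsTo (n + 1) k j b) = #{v : Fin (n + 1) → Bool | v 0 = false ∧
      visitsS1 v + b.toNat = k ∧ ascents v + (!v (Fin.last n) && b).toNat = j} := by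
  rw [pathsTo, card_filter_snoc]
  simp only [visitsS1_snoc, ascents_snoc, ← Fin.castSucc_zero, Fin.snoc_castSucc]

lemma card_pathsTo_succ_false (n k j : ℕ) :
    #(pathsTo (n + 1) k j false) = #(pathsTo n k j false) + #(pathsTo n k j true) := by
  rw [card_pathsTo_succ, ← card_filter_add_card_filter_not (fun v => v (Fin.last n) = false),
    filter_filter, filter_filter]
  congr 2 <;> ext v <;> cases h : v (Fin.last n) <;> simp [pathsTo, h]

lemma card_pathsTo_succ_true (n k j : ℕ) :
    #(pathsTo (n + 1) (k + 1) (j + 1) true) =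
      #(pathsTo n k j false) + #(pathsTo n k (j + 1) true) := by
  rw [card_pathsTo_succ, ← card_filter_add_card_filter_not (fun v => v (Fin.last n) = false),
    filter_filter, filter_filter]
  congr 2 <;> ext v <;> cases h : v (Fin.last n) <;> simp [pathsTo, h]

lemma mem_pathsTo_zero {n j : ℕ} {b : Bool} {w : Fin (n + 1) → Bool} :
    w ∈ pathsTo n 0 j b ↔ w = (fun _ => false) ∧ j = 0 ∧ b = false := by
  simp only [pathsTo, mem_filter, mem_univ, true_and, visitsS1_eq_zero_iff]
  constructor
  · rintro ⟨⟨-, rfl, rfl⟩, rfl⟩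
    exact ⟨rfl, by simp [ascents], rfl⟩
  · rintro ⟨rfl, rfl, rfl⟩
    exact ⟨⟨rfl, rfl, by simp [ascents]⟩, rfl⟩

lemma card_pathsTo_zero (n j : ℕ) (b : Bool) :
    #(pathsTo n 0 j b) = if j = 0 ∧ b = false then 1 else 0 := by
  split_ifs with h
  · exact card_eq_one.2 ⟨_, eq_singleton_iff_unique_mem.2 ⟨mem_pathsTo_zero.2 ⟨rfl, h⟩,
      fun w hw => (mem_pathsTo_zero.1 hw).1⟩⟩
  · exact card_eq_zero.2 (eq_empty_of_forall_notMem fun w hw => h (mem_pathsTo_zero.1 hw).2)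

lemma pathsTo_succ_zero (n k : ℕ) (b : Bool) : pathsTo n (k + 1) 0 b = ∅ := by
  refine eq_empty_of_forall_notMem fun w hw => ?_
  obtain ⟨⟨h0, hk, hj⟩, -⟩ := (mem_filter.1 hw).2
  rw [eq_false_of_ascents_eq_zero h0 hj] at hk
  simp [visitsS1] at hk

lemma pathsTo_eq_empty_of_lt {n k : ℕ} (j : ℕ) (b : Bool) (h : n < k) :
    pathsTo n k j b = ∅ := by
  refine eq_empty_of_forall_notMem fun w hw => ?_
  obtain ⟨⟨h0, rfl, -⟩, -⟩ := (mem_filter.1 hw).2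
  exact (visitsS1_le h0).not_gt h

theorem card_pathsTo_eq (n : ℕ) :
    (∀ k j, #(pathsTo n (k + 1) (j + 1) false) = k.choose j * (n - k - 1).choose (j + 1)) ∧
    (∀ k j, k < n → #(pathsTo n (k + 1) (j + 1) true) = k.choose j * (n - k - 1).choose j) := by
  induction n with
  | zero =>
    refine ⟨fun k j => ?_, fun k j hk => absurd hk (Nat.not_lt_zero k)⟩
    simp [pathsTo_eq_empty_of_lt _ _ k.succ_pos]
  | succ n ih =>
    refine ⟨fun k j => ?_, fun k j hk => ?_⟩
    · rw [card_pathsTo_succ_false, ih.1]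
      rcases lt_or_ge k n with hk | hk
      · rw [ih.2 k j hk, show n + 1 - k - 1 = n - k - 1 + 1 by omega, Nat.choose_succ_succ]
        ring
      · rw [pathsTo_eq_empty_of_lt _ _ (by omega : n < k + 1), show n + 1 - k - 1 = 0 by omega,
          show n - k - 1 = 0 by omega]
        simp
    · rw [card_pathsTo_succ_true]
      cases k with
      | zero => cases j <;> simp [card_pathsTo_zero]
      | succ k =>
        rw [ih.2 k j (by omega), Nat.add_sub_add_right]
        cases j with
        | zero => simp [pathsTo_succ_zero]
        | succ j =>
          rw [ih.1, Nat.choose_succ_succ k j]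
          ring

theorem stmt11 (N k j : ℕ) (hN : 2 ≤ N) (hk0 : 0 < k) (hj : 1 ≤ j) :
    (Finset.univ.filter (fun w : Fin N → Bool =>
        w ⟨0, by omega⟩ = false ∧ w ⟨N - 1, by omega⟩ = false ∧
        visitsS1 w = k ∧ ascents w = j)).card =
    Nat.choose (k - 1) (j - 1) * Nat.choose (N - k - 1) j := by
  obtain ⟨n, rfl⟩ : ∃ n, N = n + 1 := ⟨N - 1, by omega⟩
  obtain ⟨k, rfl⟩ : ∃ k', k = k' + 1 := ⟨k - 1, by omega⟩
  obtain ⟨j, rfl⟩ : ∃ j', j = j' + 1 := ⟨j - 1, by omega⟩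
  convert (card_pathsTo_eq n).1 k j using 3
  · ext w
    simp only [pathsTo, mem_filter, mem_univ, true_and, Fin.last, Fin.zero_eta,
      add_tsub_cancel_right]
    tauto
  all_goals omega
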